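/- arXiv:1603.02538 — 3 statements merged into one kernel-verified Lean document; each statement's English description precedes it below -/
import Mathlib

section
/- (The explicit example is not gauge-equivalent to an external potential.) Let Dirac matrices be fixed, let m_1 ≥ 0, and let C_0,…,C_3 and c_0,…,c_3 be real constants with at least one C_ν ≠ 0 and at least one c_ν ≠ 0. Define V_1(x_1,x_2) := ((Σ_μ C_μ γ^μ) · exp(2i γ⁵ Σ_λ c_λ x^λ) − m_1 γ⁰) ⊗ I₄ with x := x_2 − x_1, and V_2(x_1,x_2) := γ⁵ ⊗ (Σ_ν c_ν α^ν). Then there exists no twice continuously differentiable function M : ℝ⁸ → ℂ^{16×16} such that both (x_1,x_2) ↦ V_1(x_1,x_2) − Σ_{μ=0}^{3} α^μ_1 (∂M/∂x_1^μ)(x_1,x_2) is independent of x_2 and (x_1,x_2) ↦ V_2(x_1,x_2) − Σ_{ν=0}^{3} α^ν_2 (∂M/∂x_2^ν)(x_1,x_2) is independent of x_1. -/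
/-
If `M` existed, differentiating the first condition in `x₂^ν` and the second in `x₁^μ` would give
`Σ_μ α^μ_1 ∂_{2ν}∂_{1μ} M = ∂_{2ν} V₁` and `Σ_ν α^ν_2 ∂_{1μ}∂_{2ν} M = 0`. As `α^μ_1` and `α^ν_2`
commute and mixed partials of a `C²` function agree, `Σ_ν α^ν_2 ∂_{2ν} V₁ = 0`. But
`∂_{2ν} V₁ = c_ν P ⊗ I₄` with `P = (Σ_μ C_μ γ^μ) exp(…) 2iγ⁵`, so that sum is `P ⊗ Σ_ν c_ν α^ν`,
a Kronecker product of two nonzero matrices: the `γ^μ` are linearly independent, and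
`γ⁰`, `γ⁵` and exponentials are invertible.
-/

open Matrix
open scoped Kronecker

noncomputable section

attribute [local instance] Matrix.normedAddCommGroup Matrix.normedSpace

/-- Minkowski metric `diag(1,-1,-1,-1)` (as complex scalars). -/
def Mink (μ ν : Fin 4) : ℂ := if μ = ν then (if μ = 0 then 1 else -1) else 0

/-- A choice of Dirac matrices. -/
structure DiracMatrices where
  γ : Fin 4 → Matrix (Fin 4) (Fin 4) ℂ
  clifford : ∀ μ ν, γ μ * γ ν + γ ν * γ μ = (2 * Mink μ ν) • (1 : Matrix (Fin 4) (Fin 4) ℂ)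
  herm : (γ 0)ᴴ = γ 0
  antiherm : ∀ a : Fin 3, (γ a.succ)ᴴ = -γ a.succ

/-- `α^μ := γ⁰ γ^μ`. -/
def DiracMatrices.α (D : DiracMatrices) (μ : Fin 4) : Matrix (Fin 4) (Fin 4) ℂ :=
  D.γ 0 * D.γ μ

/-- `γ⁵ := i γ⁰ γ¹ γ² γ³`. -/
def DiracMatrices.γ5 (D : DiracMatrices) : Matrix (Fin 4) (Fin 4) ℂ :=
  Complex.I • (D.γ 0 * D.γ 1 * D.γ 2 * D.γ 3)

/-- 4×4 complex matrices. -/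
abbrev M4 := Matrix (Fin 4) (Fin 4) ℂ

/-- 16×16 complex matrices, acting on `ℂ¹⁶ ≅ ℂ⁴ ⊗ ℂ⁴` (indexed by `Fin 4 × Fin 4`). -/
abbrev M16 := Matrix (Fin 4 × Fin 4) (Fin 4 × Fin 4) ℂ

/-- Two-particle configuration space-time `ℝ⁸ = ℝ⁴ × ℝ⁴`. -/
abbrev Pt := (Fin 4 → ℝ) × (Fin 4 → ℝ)

/-- `M_1 := M ⊗ I₄`, `M_2 := I₄ ⊗ M` (Kronecker product). -/
def emb (k : Fin 2) (M : M4) : M16 :=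
  if k = 0 then M ⊗ₖ (1 : M4) else (1 : M4) ⊗ₖ M

/-- The coordinate direction `x_k^μ` in `ℝ⁸`. -/
def dir (k : Fin 2) (μ : Fin 4) : Pt :=
  if k = 0 then (Pi.single μ 1, 0) else (0, Pi.single μ 1)

/-- Partial derivative `∂f/∂x_k^μ` on `ℝ⁸`. -/
def pdk {F : Type*} [NormedAddCommGroup F] [NormedSpace ℝ F]
    (k : Fin 2) (μ : Fin 4) (f : Pt → F) (X : Pt) : F :=
  fderiv ℝ f X (dir k μ)

/-- `V_1(x_1,x_2) = ((Σ_μ C_μ γ^μ) · exp(2i γ⁵ Σ_λ c_λ x^λ) − m_1 γ⁰) ⊗ I₄`,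
with `x := x_2 − x_1`. -/
def VoneEx (D : DiracMatrices) (m₁ : ℝ) (C c : Fin 4 → ℝ) : Pt → M16 := fun X =>
  ((∑ μ : Fin 4, (C μ : ℂ) • D.γ μ)
      * NormedSpace.exp
          ((2 * Complex.I * ((∑ l : Fin 4, c l * (X.2 l - X.1 l) : ℝ) : ℂ)) • D.γ5)
    - (m₁ : ℂ) • D.γ 0) ⊗ₖ (1 : M4)

/-- `V_2 = γ⁵ ⊗ (Σ_ν c_ν α^ν)`. -/
def VtwoEx (D : DiracMatrices) (c : Fin 4 → ℝ) : Pt → M16 := fun _ =>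
  D.γ5 ⊗ₖ (∑ ν : Fin 4, (c ν : ℂ) • D.α ν)

open NormedSpace

lemma Mink_eq_zero_of_ne {μ ν : Fin 4} (h : μ ≠ ν) : Mink μ ν = 0 := if_neg h

lemma Mink_self_ne_zero (μ : Fin 4) : Mink μ μ ≠ 0 := by
  rw [Mink, if_pos rfl]; split_ifs <;> norm_num

lemma isUnit_smul_of_ne_zero {A : Type*} [Ring A] [Algebra ℂ A] {z : ℂ} (hz : z ≠ 0) {a : A}
    (ha : IsUnit a) : IsUnit (z • a) := by
  rw [Algebra.smul_def]
  exact (hz.isUnit.map _).mul ha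

namespace DiracMatrices

variable (D : DiracMatrices)

lemma γ_mul_self (μ : Fin 4) : D.γ μ * D.γ μ = Mink μ μ • (1 : M4) := by
  have h := D.clifford μ μ
  rw [mul_smul, ← two_smul ℂ (D.γ μ * D.γ μ)] at h
  exact smul_right_injective M4 two_ne_zero h

lemma isUnit_γ (μ : Fin 4) : IsUnit (D.γ μ) := by
  refine isUnit_of_mul_isUnit_left (y := D.γ μ) ?_
  rw [γ_mul_self]
  exact isUnit_smul_of_ne_zero (Mink_self_ne_zero μ) isUnit_one

lemma isUnit_γ5 : IsUnit D.γ5 :=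
  isUnit_smul_of_ne_zero Complex.I_ne_zero
    ((((D.isUnit_γ 0).mul (D.isUnit_γ 1)).mul (D.isUnit_γ 2)).mul (D.isUnit_γ 3))

/-- Anticommuting `∑ μ, C μ • γ^μ` with `γ^ν` isolates `2 g^{νν} C ν`. -/
lemma sum_smul_γ_ne_zero {C : Fin 4 → ℂ} (hC : ∃ ν, C ν ≠ 0) : ∑ μ, C μ • D.γ μ ≠ 0 := by
  obtain ⟨ν, hν⟩ := hC
  intro h
  have hanti : (∑ μ, C μ • D.γ μ) * D.γ ν + D.γ ν * ∑ μ, C μ • D.γ μ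
      = (2 * Mink ν ν * C ν) • (1 : M4) := by
    simp only [Finset.sum_mul, Finset.mul_sum, smul_mul_assoc, mul_smul_comm,
      ← Finset.sum_add_distrib, ← smul_add, D.clifford, smul_smul]
    rw [Finset.sum_eq_single ν (fun μ _ hμ => by rw [Mink_eq_zero_of_ne hμ]; simp) (by simp)]
    ring_nf
  rw [h, zero_mul, mul_zero, add_zero, eq_comm, smul_eq_zero] at hanti
  simp only [one_ne_zero, or_false, mul_eq_zero, two_ne_zero, Mink_self_ne_zero, false_or] at hanti
  exact hν hanti

lemma sum_smul_α_ne_zero {c : Fin 4 → ℂ} (hc : ∃ ν, c ν ≠ 0) : ∑ ν, c ν • D.α ν ≠ 0 := by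
  simp only [DiracMatrices.α, ← mul_smul_comm, ← Finset.mul_sum, ne_eq,
    (D.isUnit_γ 0).mul_right_eq_zero]
  exact D.sum_smul_γ_ne_zero hc

end DiracMatrices

lemma kronecker_ne_zero {α l m n p : Type*} [MulZeroClass α] [NoZeroDivisors α]
    {P : Matrix l m α} {Q : Matrix n p α} (hP : P ≠ 0) (hQ : Q ≠ 0) : P ⊗ₖ Q ≠ 0 := by
  obtain ⟨i, j, hij⟩ : ∃ i j, P i j ≠ 0 := by
    by_contra! h; exact hP (Matrix.ext h)
  obtain ⟨k, l, hkl⟩ : ∃ k l, Q k l ≠ 0 := by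
    by_contra! h; exact hQ (Matrix.ext h)
  intro h
  exact mul_ne_zero hij hkl (congrFun₂ h (i, k) (j, l))

lemma commute_emb_zero_emb_one (P Q : M4) : Commute (emb 0 P) (emb 1 Q) := by
  simp only [Commute, SemiconjBy, emb]
  simp [← Matrix.mul_kronecker_mul]

lemma emb_one_mul_kronecker_one (P Q : M4) : emb 1 Q * (P ⊗ₖ (1 : M4)) = P ⊗ₖ Q := by
  simp [emb, ← Matrix.mul_kronecker_mul]

lemma kronecker_sum {α ι l m n p : Type*} [NonUnitalNonAssocSemiring α] (s : Finset ι)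
    (P : Matrix l m α) (Q : ι → Matrix n p α) : P ⊗ₖ (∑ i ∈ s, Q i) = ∑ i ∈ s, P ⊗ₖ Q i := by
  ext
  simp [Matrix.sum_apply, Finset.mul_sum]

lemma sum_mul_sum_comm {R ι κ : Type*} [NonUnitalSemiring R] [Fintype ι] [Fintype κ]
    {a : ι → R} {b : κ → R} (x : ι → κ → R) (hab : ∀ i j, Commute (a i) (b j)) :
    ∑ j, b j * ∑ i, a i * x i j = ∑ i, a i * ∑ j, b j * x i j := by
  simp_rw [Finset.mul_sum, ← mul_assoc]
  rw [Finset.sum_comm]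
  exact Finset.sum_congr rfl fun i _ => Finset.sum_congr rfl fun j _ => by rw [(hab i j).eq]

/-- Derivatives only see the topology, so they may be computed in the operator norm, for which
matrices form a normed algebra. -/
lemma hasDerivAt_exp_smul_matrix {n : Type*} [Fintype n] [DecidableEq n] (E : Matrix n n ℂ)
    (t : ℝ) : HasDerivAt (fun u : ℝ => exp (u • E)) (exp (t • E) * E) t :=
  open scoped Norms.Operator in hasDerivAt_exp_smul_const E t

lemma HasLineDerivAt.of_sub_const {𝕜 E F : Type*} [NontriviallyNormedField 𝕜] [AddCommGroup E]
    [Module 𝕜 E] [NormedAddCommGroup F] [NormedSpace 𝕜 F] {V W : E → F} {w : F} {p v : E}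
    (hW : HasLineDerivAt 𝕜 W w p v) (hc : ∀ t : 𝕜, V (p + t • v) - W (p + t • v) = V p - W p) :
    HasLineDerivAt 𝕜 V w p v := by
  have hV : (fun t : 𝕜 => V (p + t • v)) = fun t => (V p - W p) + W (p + t • v) :=
    funext fun t => by rw [← hc t, sub_add_cancel]
  unfold HasLineDerivAt
  rw [hV]
  exact hW.const_add _

section MatrixCLM

variable {l m n : Type*} [Fintype l] [Fintype m] [Fintype n] [DecidableEq n]

def mulLeftCLM (K : Matrix n n ℂ) : Matrix n n ℂ →L[ℝ] Matrix n n ℂ :=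
  (LinearMap.mulLeft ℝ K).toContinuousLinearMap

def kroneckerOneCLM : Matrix l m ℂ →L[ℝ] Matrix (l × n) (m × n) ℂ :=
  LinearMap.toContinuousLinearMap
    { toFun := fun P => P ⊗ₖ 1
      map_add' := fun P Q => Matrix.add_kronecker P Q 1
      map_smul' := fun r P => Matrix.smul_kronecker r P 1 }

end MatrixCLM

lemma hasLineDerivAt_sum_mul_pdk {M : Pt → M16} {p : Pt} {M'' : Pt →L[ℝ] Pt →L[ℝ] M16}
    (hM : HasFDerivAt (fderiv ℝ M) M'' p) (k : Fin 2) (K : Fin 4 → M16) (v : Pt) :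
    HasLineDerivAt ℝ (fun Z => ∑ μ, K μ * pdk k μ M Z) (∑ μ, K μ * M'' v (dir k μ)) p v := by
  have h := HasFDerivAt.fun_sum (u := Finset.univ) fun μ _ =>
    (mulLeftCLM (K μ)).hasFDerivAt.comp p
      ((ContinuousLinearMap.apply ℝ M16 (dir k μ)).hasFDerivAt.comp p hM)
  exact h.hasLineDerivAt v

lemma sum_mul_mixed_deriv_eq {M : Pt → M16} {p : Pt} {M'' : Pt →L[ℝ] Pt →L[ℝ] M16}
    (hM : HasFDerivAt (fderiv ℝ M) M'' p) {V : Pt → M16} {w : M16} {v : Pt}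
    (hV : HasLineDerivAt ℝ V w p v) (k : Fin 2) (K : Fin 4 → M16)
    (hc : ∀ t : ℝ, V (p + t • v) - ∑ μ, K μ * pdk k μ M (p + t • v)
      = V p - ∑ μ, K μ * pdk k μ M p) :
    ∑ μ, K μ * M'' v (dir k μ) = w :=
  (hasLineDerivAt_sum_mul_pdk hM k K v).unique <|
    hV.of_sub_const fun t => by rw [← neg_sub, hc, neg_sub]

lemma VoneEx_add_smul_dir_one (D : DiracMatrices) (m₁ : ℝ) (C c : Fin 4 → ℝ) (p : Pt) (ν : Fin 4)
    (t : ℝ) : VoneEx D m₁ C c (p + t • dir 1 ν)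
      = ((∑ μ, (C μ : ℂ) • D.γ μ) * exp ((∑ l, c l * (p.2 l - p.1 l) + t * c ν) •
          (2 * Complex.I) • D.γ5) - (m₁ : ℂ) • D.γ 0) ⊗ₖ 1 := by
  simp only [VoneEx, dir, if_neg one_ne_zero, Prod.fst_add, Prod.snd_add, Prod.smul_fst,
    Prod.smul_snd, Pi.add_apply, Pi.smul_apply, Pi.single_apply]
  rw [← Complex.coe_smul, smul_smul]
  congr 5
  simp only [smul_eq_mul, Pi.zero_apply, mul_zero, add_zero, mul_ite, mul_one, add_sub_right_comm,
    mul_add, Finset.sum_add_distrib, Finset.sum_ite_eq', Finset.mem_univ, if_true]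
  push_cast
  ring

lemma hasDerivAt_exp_affine_smul {n : Type*} [Fintype n] [DecidableEq n] (E : Matrix n n ℂ)
    (s a : ℝ) :
    HasDerivAt (fun t : ℝ => exp ((s + t * a) • E)) (a • (exp (s • E) * E)) 0 := by
  have h := (hasDerivAt_exp_smul_matrix E (s + 0 * a)).scomp 0
    (((hasDerivAt_id (0 : ℝ)).mul_const a).const_add s)
  rw [zero_mul, add_zero, one_mul] at h
  exact h

lemma hasDerivAt_kronecker_one_mul_exp (A B E : M4) (s a : ℝ) :
    HasDerivAt (fun t : ℝ => (A * exp ((s + t * a) • E) - B) ⊗ₖ (1 : M4))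
      ((a • (A * (exp (s • E) * E))) ⊗ₖ 1) 0 := by
  refine ((kroneckerOneCLM (n := Fin 4)).hasFDerivAt.comp_hasDerivAt 0
    (((mulLeftCLM A).hasFDerivAt.comp_hasDerivAt 0
      (hasDerivAt_exp_affine_smul E s a)).sub_const B)).congr_deriv ?_
  exact congrArg (· ⊗ₖ (1 : M4)) (mul_smul_comm a A _)

lemma hasLineDerivAt_VoneEx (D : DiracMatrices) (m₁ : ℝ) (C c : Fin 4 → ℝ) (p : Pt) (ν : Fin 4) :
    HasLineDerivAt ℝ (VoneEx D m₁ C c)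
      ((c ν • ((∑ μ, (C μ : ℂ) • D.γ μ) * (exp ((∑ l, c l * (p.2 l - p.1 l)) •
          (2 * Complex.I) • D.γ5) * ((2 * Complex.I) • D.γ5)))) ⊗ₖ 1) p (dir 1 ν) := by
  unfold HasLineDerivAt
  simp_rw [VoneEx_add_smul_dir_one]
  exact hasDerivAt_kronecker_one_mul_exp _ _ _ _ _

lemma DiracMatrices.kronecker_sum_smul_α_eq_zero (D : DiracMatrices) {c : Fin 4 → ℝ} {P : M4}
    {x : Fin 4 → Fin 4 → M16} (h₂ : ∀ ν, ∑ μ, emb 0 (D.α μ) * x μ ν = (c ν • P) ⊗ₖ 1)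
    (h₁ : ∀ μ, ∑ ν, emb 1 (D.α ν) * x μ ν = 0) :
    P ⊗ₖ ∑ ν, (c ν : ℂ) • D.α ν = 0 :=
  calc P ⊗ₖ ∑ ν, (c ν : ℂ) • D.α ν = ∑ ν, emb 1 (D.α ν) * ((c ν • P) ⊗ₖ 1) := by
        simp [kronecker_sum, emb_one_mul_kronecker_one, Matrix.smul_kronecker,
          Matrix.kronecker_smul, Complex.coe_smul]
    _ = ∑ ν, emb 1 (D.α ν) * ∑ μ, emb 0 (D.α μ) * x μ ν := by simp_rw [h₂]
    _ = ∑ μ, emb 0 (D.α μ) * ∑ ν, emb 1 (D.α ν) * x μ ν :=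
        sum_mul_sum_comm x fun μ ν => commute_emb_zero_emb_one _ _
    _ = 0 := by simp [h₁]

lemma add_smul_dir_one (p : Pt) (t : ℝ) (ν : Fin 4) :
    p + t • dir 1 ν = (p.1, p.2 + t • Pi.single ν 1) := by
  simp [dir, Prod.ext_iff]

lemma add_smul_dir_zero (p : Pt) (t : ℝ) (μ : Fin 4) :
    p + t • dir 0 μ = (p.1 + t • Pi.single μ 1, p.2) := by
  simp [dir, Prod.ext_iff]

theorem explicit_example_is_interacting_general
    (D : DiracMatrices) (m₁ : ℝ)
    (C c : Fin 4 → ℝ) (hC : ∃ ν, C ν ≠ 0) (hc : ∃ ν, c ν ≠ 0) :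
    ¬ ∃ M : Pt → M16, ContDiff ℝ 2 M ∧
      (∀ x₁ x₂ x₂' : Fin 4 → ℝ,
        VoneEx D m₁ C c (x₁, x₂) - ∑ μ : Fin 4, emb 0 (D.α μ) * pdk 0 μ M (x₁, x₂)
          = VoneEx D m₁ C c (x₁, x₂') - ∑ μ : Fin 4, emb 0 (D.α μ) * pdk 0 μ M (x₁, x₂')) ∧
      (∀ x₁ x₁' x₂ : Fin 4 → ℝ,
        VtwoEx D c (x₁, x₂) - ∑ ν : Fin 4, emb 1 (D.α ν) * pdk 1 ν M (x₁, x₂)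
          = VtwoEx D c (x₁', x₂) - ∑ ν : Fin 4, emb 1 (D.α ν) * pdk 1 ν M (x₁', x₂)) := by
  rintro ⟨M, hM, h₁, h₂⟩
  set p : Pt := 0
  set M'' := fderiv ℝ (fderiv ℝ M) p
  have hM'' : HasFDerivAt (fderiv ℝ M) M'' p :=
    ((hM.fderiv_right (m := 1) le_rfl).differentiable one_ne_zero p).hasFDerivAt
  have hsymm : ∀ v w, M'' v w = M'' w v := hM.contDiffAt.isSymmSndFDerivAt (by simp)
  set E : M4 := (2 * Complex.I) • D.γ5
  set P : M4 := (∑ μ, (C μ : ℂ) • D.γ μ) * (exp ((∑ l, c l * (p.2 l - p.1 l)) • E) * E)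
  have hP : P ≠ 0 := by
    have hE : IsUnit E := isUnit_smul_of_ne_zero (by simp) D.isUnit_γ5
    rw [ne_eq, ((Matrix.isUnit_exp _).mul hE).mul_left_eq_zero]
    exact D.sum_smul_γ_ne_zero (hC.imp fun _ h => Complex.ofReal_ne_zero.mpr h)
  refine kronecker_ne_zero hP (D.sum_smul_α_ne_zero (hc.imp fun _ h =>
    Complex.ofReal_ne_zero.mpr h)) (D.kronecker_sum_smul_α_eq_zero
    (x := fun μ ν => M'' (dir 0 μ) (dir 1 ν)) (fun ν => ?_) fun μ => ?_)
  · simp_rw [← hsymm (dir 1 ν)]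
    exact sum_mul_mixed_deriv_eq hM'' (hasLineDerivAt_VoneEx D m₁ C c p ν) 0 _ fun t => by
      rw [add_smul_dir_one]; exact h₁ _ _ _
  · exact sum_mul_mixed_deriv_eq hM'' (V := VtwoEx D c) (hasDerivAt_const _ _) 1 _ fun t => by
      rw [add_smul_dir_zero]; exact h₂ _ _ _

theorem explicit_example_is_interacting
    (D : DiracMatrices) (m₁ : ℝ) (hm₁ : 0 ≤ m₁)
    (C c : Fin 4 → ℝ) (hC : ∃ ν, C ν ≠ 0) (hc : ∃ ν, c ν ≠ 0) :
    ¬ ∃ M : Pt → M16, ContDiff ℝ 2 M ∧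
      (∀ x₁ x₂ x₂' : Fin 4 → ℝ,
        VoneEx D m₁ C c (x₁, x₂) - ∑ μ : Fin 4, emb 0 (D.α μ) * pdk 0 μ M (x₁, x₂)
          = VoneEx D m₁ C c (x₁, x₂') - ∑ μ : Fin 4, emb 0 (D.α μ) * pdk 0 μ M (x₁, x₂')) ∧
      (∀ x₁ x₁' x₂ : Fin 4 → ℝ,
        VtwoEx D c (x₁, x₂) - ∑ ν : Fin 4, emb 1 (D.α ν) * pdk 1 ν M (x₁, x₂)
          = VtwoEx D c (x₁', x₂) - ∑ ν : Fin 4, emb 1 (D.α ν) * pdk 1 ν M (x₁', x₂)) :=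
  explicit_example_is_interacting_general D m₁ C c hC hc
end
end

section
/- Let Y_0,…,Y_3 and Z_0,…,Z_3 be real constants, m_1 ≥ 0, and fix μ ∈ {0,1,2,3}. Let A, B, C, D : ℝ⁴ → ℂ be continuously differentiable functions satisfying for all ν = 0,…,3 on ℝ⁴: (i/2) ∂_ν A = B Y_ν + D Z_ν; (i/2) ∂_ν B = (m_1 δ_{0μ} + A) Y_ν + C Z_ν; (i/2) ∂_ν C = −B Z_ν − D Y_ν; (i/2) ∂_ν D = −(m_1 δ_{0μ} + A) Z_ν − C Y_ν (here ∂_ν is the partial derivative in the ν-th coordinate of ℝ⁴ and δ_{0μ} is the Kronecker delta). Then B and D are twice continuously differentiable and satisfy, for all ν, λ = 0,…,3: (1/4) ∂_ν ∂_λ B = (Z_λ Z_ν − Y_λ Y_ν) B + (Y_ν Z_λ − Y_λ Z_ν) D and (1/4) ∂_ν ∂_λ D = (Z_λ Z_ν − Y_λ Y_ν) D + (Y_ν Z_λ − Y_λ Z_ν) B. -/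
/-!
Solving each first-order equation for the derivative, `∂_λ B` and `∂_λ D` are affine
combinations of `A` and `C` with constant coefficients, the constant term coming from
`M = m₁ δ_{0μ}`. Since `A` and `C` are `C¹`, so are these partials, hence `B` and `D` are
`C²`; differentiating once more and substituting the equations for `∂_ν A` and `∂_ν C`,
the factor `(-2i)² = -4` produces the second-order equations.
-/

noncomputable section

/-- Partial derivative `∂_ν` on ℝ⁴ for ℂ-valued functions. -/
def pd4 (ν : Fin 4) (f : (Fin 4 → ℝ) → ℂ) (x : Fin 4 → ℝ) : ℂ :=
  fderiv ℝ f x (Pi.single ν 1)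

open Complex

theorem contDiff_succ_of_contDiff_fderiv_single {ι E : Type*} [Fintype ι] [DecidableEq ι]
    [NormedAddCommGroup E] [NormedSpace ℝ E] {f : (ι → ℝ) → E} {n : ℕ∞}
    (hf : Differentiable ℝ f)
    (h : ∀ i, ContDiff ℝ n fun x => fderiv ℝ f x (Pi.single i 1)) :
    ContDiff ℝ (n + 1) f := by
  refine contDiff_succ_iff_fderiv_apply.2 ⟨hf, by simp, fun y => ?_⟩
  have hsum :
      (fun x => fderiv ℝ f x y) = fun x => ∑ i, y i • fderiv ℝ f x (Pi.single i 1) := by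
    funext x
    conv_lhs => rw [pi_eq_sum_univ' y]
    simp only [map_sum, map_smul]
  rw [hsum]
  exact ContDiff.sum fun i _ => (h i).const_smul (y i)

theorem eq_neg_two_mul_I_mul_of_I_div_two_mul_eq {p r : ℂ} (h : I / 2 * p = r) :
    p = -2 * I * r := by
  linear_combination (-2 * I) * h + p * I_sq

theorem pd4_const_mul_add_const_mul_add_const (ν : Fin 4) {f g : (Fin 4 → ℝ) → ℂ}
    {x : Fin 4 → ℝ} (hf : DifferentiableAt ℝ f x) (hg : DifferentiableAt ℝ g x) (a b c : ℂ) :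
    pd4 ν (fun y => a * f y + b * g y + c) x = a * pd4 ν f x + b * pd4 ν g x := by
  have hderiv : HasFDerivAt (fun y => a * f y + b * g y + c)
      (a • fderiv ℝ f x + b • fderiv ℝ g x) x :=
    ((hf.hasFDerivAt.const_mul a).add (hg.hasFDerivAt.const_mul b)).add_const c
  simp [pd4, hderiv.fderiv]

section FirstOrderSystem

variable {Y Z : Fin 4 → ℝ} {M : ℂ} {A B C D : (Fin 4 → ℝ) → ℂ}

theorem pd4_B_eq
    (eqB : ∀ ν x, I / 2 * pd4 ν B x = (M + A x) * (Y ν : ℂ) + C x * (Z ν : ℂ)) (ν : Fin 4) :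
    pd4 ν B = fun x => -2 * I * Y ν * A x + -2 * I * Z ν * C x + -2 * I * M * Y ν := by
  funext x
  rw [eq_neg_two_mul_I_mul_of_I_div_two_mul_eq (eqB ν x)]
  ring

theorem pd4_D_eq
    (eqD : ∀ ν x, I / 2 * pd4 ν D x = -((M + A x) * (Z ν : ℂ)) - C x * (Y ν : ℂ)) (ν : Fin 4) :
    pd4 ν D = fun x => 2 * I * Z ν * A x + 2 * I * Y ν * C x + 2 * I * M * Z ν := by
  funext x
  rw [eq_neg_two_mul_I_mul_of_I_div_two_mul_eq (eqD ν x)]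
  ring

theorem contDiff_two_of_pd4_eq_affine {f : (Fin 4 → ℝ) → ℂ} {a b c : Fin 4 → ℂ}
    (hf : ContDiff ℝ 1 f) (hA : ContDiff ℝ 1 A) (hC : ContDiff ℝ 1 C)
    (h : ∀ ν, pd4 ν f = fun x => a ν * A x + b ν * C x + c ν) :
    ContDiff ℝ 2 f :=
  contDiff_succ_of_contDiff_fderiv_single (n := 1) (hf.differentiable one_ne_zero) fun ν => by
    change ContDiff ℝ 1 (pd4 ν f)
    rw [h ν]
    fun_prop

theorem one_fourth_mul_pd4_pd4_B (hA : ContDiff ℝ 1 A) (hC : ContDiff ℝ 1 C)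
    (eqA : ∀ ν x, I / 2 * pd4 ν A x = B x * (Y ν : ℂ) + D x * (Z ν : ℂ))
    (eqB : ∀ ν x, I / 2 * pd4 ν B x = (M + A x) * (Y ν : ℂ) + C x * (Z ν : ℂ))
    (eqC : ∀ ν x, I / 2 * pd4 ν C x = -(B x * (Z ν : ℂ)) - D x * (Y ν : ℂ))
    (ν lam : Fin 4) (x : Fin 4 → ℝ) :
    (1 / 4 : ℂ) * pd4 ν (pd4 lam B) x
      = ((Z lam * Z ν - Y lam * Y ν : ℝ) : ℂ) * B x
        + ((Y ν * Z lam - Y lam * Z ν : ℝ) : ℂ) * D x := by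
  rw [pd4_B_eq eqB, pd4_const_mul_add_const_mul_add_const ν (hA.differentiable one_ne_zero x)
    (hC.differentiable one_ne_zero x), eq_neg_two_mul_I_mul_of_I_div_two_mul_eq (eqA ν x),
    eq_neg_two_mul_I_mul_of_I_div_two_mul_eq (eqC ν x)]
  push_cast
  linear_combination (Y lam * Y ν * B x + Y lam * Z ν * D x - Z lam * Z ν * B x
    - Z lam * Y ν * D x) * I_sq

theorem one_fourth_mul_pd4_pd4_D (hA : ContDiff ℝ 1 A) (hC : ContDiff ℝ 1 C)
    (eqA : ∀ ν x, I / 2 * pd4 ν A x = B x * (Y ν : ℂ) + D x * (Z ν : ℂ))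
    (eqC : ∀ ν x, I / 2 * pd4 ν C x = -(B x * (Z ν : ℂ)) - D x * (Y ν : ℂ))
    (eqD : ∀ ν x, I / 2 * pd4 ν D x = -((M + A x) * (Z ν : ℂ)) - C x * (Y ν : ℂ))
    (ν lam : Fin 4) (x : Fin 4 → ℝ) :
    (1 / 4 : ℂ) * pd4 ν (pd4 lam D) x
      = ((Z lam * Z ν - Y lam * Y ν : ℝ) : ℂ) * D x
        + ((Y ν * Z lam - Y lam * Z ν : ℝ) : ℂ) * B x := by
  rw [pd4_D_eq eqD, pd4_const_mul_add_const_mul_add_const ν (hA.differentiable one_ne_zero x)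
    (hC.differentiable one_ne_zero x), eq_neg_two_mul_I_mul_of_I_div_two_mul_eq (eqA ν x),
    eq_neg_two_mul_I_mul_of_I_div_two_mul_eq (eqC ν x)]
  push_cast
  linear_combination (Y lam * Z ν * B x + Y lam * Y ν * D x - Z lam * Y ν * B x
    - Z lam * Z ν * D x) * I_sq

end FirstOrderSystem

theorem second_order_equations_for_B_D_general
    (Y Z : Fin 4 → ℝ) (m₁ : ℝ) (μ : Fin 4)
    (A B C D : (Fin 4 → ℝ) → ℂ)
    (hA : ContDiff ℝ 1 A) (hB : ContDiff ℝ 1 B)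
    (hC : ContDiff ℝ 1 C) (hD : ContDiff ℝ 1 D)
    (eqA : ∀ ν : Fin 4, ∀ x, (Complex.I / 2) * pd4 ν A x = B x * (Y ν : ℂ) + D x * (Z ν : ℂ))
    (eqB : ∀ ν : Fin 4, ∀ x, (Complex.I / 2) * pd4 ν B x
      = ((m₁ : ℂ) * (if μ = 0 then 1 else 0) + A x) * (Y ν : ℂ) + C x * (Z ν : ℂ))
    (eqC : ∀ ν : Fin 4, ∀ x, (Complex.I / 2) * pd4 ν C x
      = -(B x * (Z ν : ℂ)) - D x * (Y ν : ℂ))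
    (eqD : ∀ ν : Fin 4, ∀ x, (Complex.I / 2) * pd4 ν D x
      = -(((m₁ : ℂ) * (if μ = 0 then 1 else 0) + A x) * (Z ν : ℂ)) - C x * (Y ν : ℂ)) :
    ContDiff ℝ 2 B ∧ ContDiff ℝ 2 D ∧
    (∀ ν lam : Fin 4, ∀ x,
      (1 / 4 : ℂ) * pd4 ν (pd4 lam B) x
        = ((Z lam * Z ν - Y lam * Y ν : ℝ) : ℂ) * B x
          + ((Y ν * Z lam - Y lam * Z ν : ℝ) : ℂ) * D x) ∧
    (∀ ν lam : Fin 4, ∀ x,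
      (1 / 4 : ℂ) * pd4 ν (pd4 lam D) x
        = ((Z lam * Z ν - Y lam * Y ν : ℝ) : ℂ) * D x
          + ((Y ν * Z lam - Y lam * Z ν : ℝ) : ℂ) * B x) :=
  ⟨contDiff_two_of_pd4_eq_affine hB hA hC (pd4_B_eq eqB),
    contDiff_two_of_pd4_eq_affine hD hA hC (pd4_D_eq eqD),
    one_fourth_mul_pd4_pd4_B hA hC eqA eqB eqC, one_fourth_mul_pd4_pd4_D hA hC eqA eqC eqD⟩

theorem second_order_equations_for_B_D
    (Y Z : Fin 4 → ℝ) (m₁ : ℝ) (hm₁ : 0 ≤ m₁) (μ : Fin 4)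
    (A B C D : (Fin 4 → ℝ) → ℂ)
    (hA : ContDiff ℝ 1 A) (hB : ContDiff ℝ 1 B)
    (hC : ContDiff ℝ 1 C) (hD : ContDiff ℝ 1 D)
    (eqA : ∀ ν : Fin 4, ∀ x, (Complex.I / 2) * pd4 ν A x = B x * (Y ν : ℂ) + D x * (Z ν : ℂ))
    (eqB : ∀ ν : Fin 4, ∀ x, (Complex.I / 2) * pd4 ν B x
      = ((m₁ : ℂ) * (if μ = 0 then 1 else 0) + A x) * (Y ν : ℂ) + C x * (Z ν : ℂ))
    (eqC : ∀ ν : Fin 4, ∀ x, (Complex.I / 2) * pd4 ν C x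
      = -(B x * (Z ν : ℂ)) - D x * (Y ν : ℂ))
    (eqD : ∀ ν : Fin 4, ∀ x, (Complex.I / 2) * pd4 ν D x
      = -(((m₁ : ℂ) * (if μ = 0 then 1 else 0) + A x) * (Z ν : ℂ)) - C x * (Y ν : ℂ)) :
    ContDiff ℝ 2 B ∧ ContDiff ℝ 2 D ∧
    (∀ ν lam : Fin 4, ∀ x,
      (1 / 4 : ℂ) * pd4 ν (pd4 lam B) x
        = ((Z lam * Z ν - Y lam * Y ν : ℝ) : ℂ) * B x
          + ((Y ν * Z lam - Y lam * Z ν : ℝ) : ℂ) * D x) ∧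
    (∀ ν lam : Fin 4, ∀ x,
      (1 / 4 : ℂ) * pd4 ν (pd4 lam D) x
        = ((Z lam * Z ν - Y lam * Y ν : ℝ) : ℂ) * D x
          + ((Y ν * Z lam - Y lam * Z ν : ℝ) : ℂ) * B x) :=
  second_order_equations_for_B_D_general Y Z m₁ μ A B C D hA hB hC hD eqA eqB eqC eqD
end
end

section
/- Let k = (k_0, k_1, k_2, k_3) ∈ ℂ⁴ with k ≠ 0 and let B : ℝ⁴ → ℂ be twice continuously differentiable satisfying ∂_ν ∂_λ B = k_ν k_λ B for all ν, λ = 0,…,3 on ℝ⁴. Then there exist constants C⁺, C⁻ ∈ ℂ such that B(x) = C⁺ exp(Σ_{ν=0}^{3} k_ν x^ν) + C⁻ exp(−Σ_{ν=0}^{3} k_ν x^ν) for all x ∈ ℝ⁴. -/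
/-!
Write `K x = ∑ ν, k ν * x ν`, so the equation says `D²B(y) = B(y) • K ⊗ K`. Then `∂_u B` has
derivative `(K u * B) • K`, and symmetry of the second derivative of `∂_u B` forces
`DB(y)` to be proportional to `K` at every point. Consequently, for `ε = ±1` and `K u ≠ 0`, the
function `(K u * B + ε ∂_u B) * exp(-ε K)` has vanishing derivative, hence is constant; adding
the two constants solves for `B`.
-/

noncomputable section

open ContinuousLinearMap

theorem ContinuousLinearMap.ext_pi_single {R ι F : Type*} [Semiring R] [TopologicalSpace R]
    [Fintype ι] [DecidableEq ι] [AddCommMonoid F] [Module R F] [TopologicalSpace F]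
    {f g : (ι → R) →L[R] F} (h : ∀ i, f (Pi.single i 1) = g (Pi.single i 1)) : f = g :=
  coe_injective ((Pi.basisFun R ι).ext fun i => by simpa using h i)

section SecondOrderExponentialEquation

variable {E : Type*} [NormedAddCommGroup E] [NormedSpace ℝ E]
  {K : E →L[ℝ] ℂ} {B : E → ℂ} {B' : E → E →L[ℝ] ℂ}

theorem hasFDerivAt_apply_of_hasFDerivAt_smulRight
    (hB' : ∀ y, HasFDerivAt B' (B y • K.smulRight K) y) (u y : E) :
    HasFDerivAt (fun z => B' z u) ((K u * B y) • K) y := by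
  refine ((hB' y).clm_apply (hasFDerivAt_const u y)).congr_fderiv ?_
  ext v
  simp only [comp_zero, zero_add, flip_apply, smul_apply, smulRight_apply, smul_eq_mul]
  ring

theorem apply_mul_comm_of_hasFDerivAt_smulRight (hK : K ≠ 0)
    (hB : ∀ y, HasFDerivAt B (B' y) y) (hB' : ∀ y, HasFDerivAt B' (B y • K.smulRight K) y)
    (y v w : E) :
    B' y v * K w = B' y w * K v := by
  obtain ⟨u, hu⟩ : ∃ u, K u ≠ 0 := by simpa [ContinuousLinearMap.ext_iff] using hK
  have hsymm := second_derivative_symmetric (hasFDerivAt_apply_of_hasFDerivAt_smulRight hB' u)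
    (((hB y).const_mul (K u)).smul_const K) v w
  simp only [smulRight_apply, smul_apply, smul_eq_mul] at hsymm
  exact mul_left_cancel₀ hu (by simpa only [mul_assoc] using hsymm)

theorem mul_exp_eq_of_hasFDerivAt_smulRight (hK : K ≠ 0)
    (hB : ∀ y, HasFDerivAt B (B' y) y) (hB' : ∀ y, HasFDerivAt B' (B y • K.smulRight K) y)
    (u : E) {ε : ℂ} (hε : ε * ε = 1) (y : E) :
    (K u * B y + ε * B' y u) * Complex.exp (-(ε * K y)) = K u * B 0 + ε * B' 0 u := by
  set Q := fun z => (K u * B z + ε * B' z u) * Complex.exp (-(ε * K z))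
  have hQ : ∀ z, HasFDerivAt Q 0 z := fun z => by
    refine ((((hB z).const_mul (K u)).add
      ((hasFDerivAt_apply_of_hasFDerivAt_smulRight hB' u z).const_mul ε)).mul
      (((K.hasFDerivAt.const_mul ε).neg).cexp)).congr_fderiv ?_
    ext v
    simp only [Pi.add_apply, Pi.neg_apply, smul_neg, smul_add, add_apply, neg_apply, smul_apply,
      smul_eq_mul, zero_apply]
    linear_combination Complex.exp (-(ε * K z)) *
      (apply_mul_comm_of_hasFDerivAt_smulRight hK hB hB' z v u - B' z u * K v * hε)
  simpa [Q] using is_const_of_fderiv_eq_zero (fun z => (hQ z).differentiableAt)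
    (fun z => (hQ z).fderiv) y 0

theorem exists_eq_exp_add_exp_of_hasFDerivAt_smulRight (hK : K ≠ 0)
    (hB : ∀ y, HasFDerivAt B (B' y) y) (hB' : ∀ y, HasFDerivAt B' (B y • K.smulRight K) y) :
    ∃ Cp Cm : ℂ, ∀ y, B y = Cp * Complex.exp (K y) + Cm * Complex.exp (-K y) := by
  obtain ⟨u, hu⟩ : ∃ u, K u ≠ 0 := by simpa [ContinuousLinearMap.ext_iff] using hK
  refine ⟨(K u * B 0 + B' 0 u) / (2 * K u), (K u * B 0 - B' 0 u) / (2 * K u), fun y => ?_⟩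
  have hplus := mul_exp_eq_of_hasFDerivAt_smulRight hK hB hB' u (one_mul 1) y
  have hminus := mul_exp_eq_of_hasFDerivAt_smulRight hK hB hB' u (ε := -1) (by norm_num) y
  simp only [one_mul, neg_one_mul, neg_neg, ← sub_eq_add_neg] at hplus hminus
  rw [← hplus, ← hminus, Complex.exp_neg]
  field_simp
  ring

end SecondOrderExponentialEquation

section Pairing

variable {ι : Type*} [Fintype ι]

def pairing (k : ι → ℂ) : (ι → ℝ) →L[ℝ] ℂ :=
  ∑ ν, k ν • Complex.ofRealCLM.comp (proj ν)

theorem pairing_apply (k : ι → ℂ) (x : ι → ℝ) :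
    pairing k x = ∑ ν, k ν * (x ν : ℂ) := by
  simp [pairing]

theorem pairing_single [DecidableEq ι] (k : ι → ℂ) (ν : ι) :
    pairing k (Pi.single ν 1) = k ν := by
  simp [pairing_apply, Pi.single_apply, apply_ite Complex.ofReal]

theorem pairing_ne_zero {k : ι → ℂ} (hk : k ≠ 0) : pairing k ≠ 0 := by
  classical
  contrapose! hk
  funext ν
  simpa [pairing_single] using congrArg (· (Pi.single ν 1)) hk

end Pairing

theorem fderiv_fderiv_apply_single {B : (Fin 4 → ℝ) → ℂ} {y : Fin 4 → ℝ}
    (hB : DifferentiableAt ℝ (fderiv ℝ B) y) (ν lam : Fin 4) :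
    fderiv ℝ (fderiv ℝ B) y (Pi.single ν 1) (Pi.single lam 1) = pd4 ν (pd4 lam B) y := by
  rw [pd4, show pd4 lam B = fun x => fderiv ℝ B x (Pi.single lam 1) from rfl,
    fderiv_clm_apply hB (differentiableAt_const _)]
  simp

theorem hasFDerivAt_fderiv_of_pd4_pd4 {k : Fin 4 → ℂ} {B : (Fin 4 → ℝ) → ℂ}
    (hB : ContDiff ℝ 2 B) (heq : ∀ ν lam : Fin 4, ∀ x, pd4 ν (pd4 lam B) x = k ν * k lam * B x)
    (y : Fin 4 → ℝ) :
    HasFDerivAt (fderiv ℝ B) (B y • (pairing k).smulRight (pairing k)) y := by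
  have hB' : Differentiable ℝ (fderiv ℝ B) :=
    (hB.fderiv_right (m := 1) (by norm_num)).differentiable one_ne_zero
  convert (hB' y).hasFDerivAt using 1
  refine ext_pi_single fun ν => ext_pi_single fun lam => ?_
  simp only [smul_apply, smulRight_apply, pairing_single, smul_eq_mul,
    fderiv_fderiv_apply_single (hB' y), heq]
  ring

theorem exponential_solution_form
    (k : Fin 4 → ℂ) (hk : k ≠ 0)
    (B : (Fin 4 → ℝ) → ℂ) (hB : ContDiff ℝ 2 B)
    (heq : ∀ ν lam : Fin 4, ∀ x, pd4 ν (pd4 lam B) x = k ν * k lam * B x) :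
    ∃ Cp Cm : ℂ, ∀ x : Fin 4 → ℝ,
      B x = Cp * Complex.exp (∑ ν : Fin 4, k ν * (x ν : ℂ))
        + Cm * Complex.exp (-∑ ν : Fin 4, k ν * (x ν : ℂ)) := by
  obtain ⟨Cp, Cm, hB_eq⟩ := exists_eq_exp_add_exp_of_hasFDerivAt_smulRight (pairing_ne_zero hk)
    (fun y => (hB.differentiable two_ne_zero y).hasFDerivAt) (hasFDerivAt_fderiv_of_pd4_pd4 hB heq)
  exact ⟨Cp, Cm, fun x => by simpa only [pairing_apply] using hB_eq x⟩
end
end
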